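/- Let bV, bF : ℤ × ℤ → EuclideanSpace ℝ (Fin 3) and ρV, ρF : ℤ × ℤ → ℝ satisfy ⟪bV(v), bF(f)⟫ = ρV(v) + ρF(f) for every incident vertex–face pair (v, f). Define the Möbius lift L(d) = (b(d)₀, b(d)₁, b(d)₂, ρ(d) − 1/2, ρ(d) + 1/2) ∈ ℝ⁵, for vertices using (bV, ρV) and for faces using (bF, ρF). Then (bV, bF) is a conjugate binet if and only if for every p ∈ ℤ × ℤ the four lift vectors LV(p), LV(p+(1,0)), LV(p+(0,1)), LV(p+(1,1)) span a submodule of ℝ⁵ of finrank at most 3, and likewise the four lift vectors LF(p), LF(p+(1,0)), LF(p+(0,1)), LF(p+(1,1)). (An orthogonal binet is a principal binet if and only if its Möbius lift is a conjugate binet.) -/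

import Mathlib

open scoped InnerProductSpace

/-- A vertex `v` is incident to the face labeled `f` if `v` is one of its four corners. -/
def Incident (v f : ℤ × ℤ) : Prop :=
  v = f ∨ v = f + (1, 0) ∨ v = f + (0, 1) ∨ v = f + (1, 1)

/-- The set of pairwise differences of elements of a set. -/
def pairDiffs {E : Type*} [AddCommGroup E] (s : Set E) : Set E :=
  {x | ∃ y ∈ s, ∃ z ∈ s, x = y - z}

/-- A map `g : ℤ × ℤ → E` is a conjugate net if the four points of each quad are coplanar,
i.e. the submodule spanned by their pairwise differences has finrank at most `2`. -/
def IsConjugateNet {E : Type*} [AddCommGroup E] [Module ℝ E] (g : ℤ × ℤ → E) : Prop :=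
  ∀ p : ℤ × ℤ, Module.finrank ℝ
    (Submodule.span ℝ (pairDiffs
      ({g p, g (p + (1, 0)), g (p + (0, 1)), g (p + (1, 1))} : Set E))) ≤ 2

/-- The Möbius lift `L(d) = (b(d)₀, b(d)₁, b(d)₂, ρ(d) - 1/2, ρ(d) + 1/2)` of a sphere with
center `b d` and `2ρ(d) = ‖b d‖² - r²`. -/
noncomputable def mlift (b : ℤ × ℤ → EuclideanSpace ℝ (Fin 3)) (ρ : ℤ × ℤ → ℝ)
    (d : ℤ × ℤ) : Fin 5 → ℝ :=
  ![b d 0, b d 1, b d 2, ρ d - 1 / 2, ρ d + 1 / 2]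

open Module Submodule

/-!
On the four vertices of the face `p` the orthogonality relation reads
`ρV d = ⟪bV d, bF p⟫ - ρF p`, and on the four faces around the vertex `p + (1, 1)` it reads
`ρF f = ⟪bF f, bV (p + (1, 1))⟫ - ρV (p + (1, 1))`. So on every quad the Möbius lift is an
injective affine image `L = A ∘ b + w` of the net, landing in the affine hyperplane
`x₄ - x₃ = 1` that misses the origin. For points in such a hyperplane the linear span has
exactly one dimension more than the span of the pairwise differences, and `A` preserves the
latter; hence "the lift spans at most `3` dimensions" is "the quad is planar".
-/

section Hyperplane

variable {R M : Type*} [Ring R] [AddCommGroup M] [Module R M]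

lemma span_eq_span_singleton_sup_span_pairDiffs {S : Set M} {v : M} (hv : v ∈ S) :
    span R S = R ∙ v ⊔ span R (pairDiffs S) := by
  refine le_antisymm (span_le.2 fun x hx => ?_) (sup_le ?_ (span_le.2 ?_))
  · rw [SetLike.mem_coe, ← add_sub_cancel v x]
    exact add_mem (mem_sup_left (mem_span_singleton_self v))
      (mem_sup_right (subset_span ⟨x, hx, v, hv, rfl⟩))
  · exact (span_singleton_le_iff_mem v _).2 (subset_span hv)
  · rintro _ ⟨y, hy, z, hz, rfl⟩
    exact sub_mem (subset_span hy) (subset_span hz)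

lemma span_pairDiffs_le_ker {S : Set M} (φ : M →ₗ[R] R) {c : R} (hφ : ∀ x ∈ S, φ x = c) :
    span R (pairDiffs S) ≤ LinearMap.ker φ := by
  rw [span_le]
  rintro _ ⟨y, hy, z, hz, rfl⟩
  simp [hφ y hy, hφ z hz]

lemma pairDiffs_image_add_const {N : Type*} [AddCommGroup N] [Module R N] (T : M →ₗ[R] N)
    (w : N) (s : Set M) : pairDiffs ((fun x => T x + w) '' s) = T '' pairDiffs s := by
  ext x
  constructor
  · rintro ⟨_, ⟨y, hy, rfl⟩, _, ⟨z, hz, rfl⟩, rfl⟩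
    exact ⟨y - z, ⟨y, hy, z, hz, rfl⟩, by simp⟩
  · rintro ⟨_, ⟨y, hy, z, hz, rfl⟩, rfl⟩
    exact ⟨T y + w, ⟨y, hy, rfl⟩, T z + w, ⟨z, hz, rfl⟩, by simp⟩

theorem finrank_span_eq_finrank_span_pairDiffs_add_one {K V : Type*} [Field K] [AddCommGroup V]
    [Module K V] [FiniteDimensional K V] {S : Set V} (hS : S.Nonempty) (φ : V →ₗ[K] K)
    (hφ : ∀ x ∈ S, φ x = 1) :
    finrank K (span K S) = finrank K (span K (pairDiffs S)) + 1 := by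
  obtain ⟨v, hv⟩ := hS
  have hv0 : v ≠ 0 := fun h => by simpa [h] using hφ v hv
  have hdisj : Disjoint (K ∙ v) (span K (pairDiffs S)) :=
    ((disjoint_span_singleton' hv0).2 fun hmem => by
      simpa [hφ v hv] using span_pairDiffs_le_ker φ hφ hmem).symm
  rw [span_eq_span_singleton_sup_span_pairDiffs hv, ← add_zero (finrank K _),
    ← finrank_bot K V, ← hdisj.eq_bot, finrank_sup_add_finrank_inf_eq,
    finrank_span_singleton hv0, add_comm]

end Hyperplane

section MoebiusLift

noncomputable def mliftLinear (c : EuclideanSpace ℝ (Fin 3)) :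
    EuclideanSpace ℝ (Fin 3) →ₗ[ℝ] (Fin 5 → ℝ) where
  toFun x := ![x 0, x 1, x 2, ⟪x, c⟫_ℝ, ⟪x, c⟫_ℝ]
  map_add' x y := by
    funext i
    fin_cases i <;> simp [inner_add_left]
  map_smul' r x := by
    funext i
    fin_cases i <;> simp [real_inner_smul_left]

lemma mliftLinear_injective (c : EuclideanSpace ℝ (Fin 3)) :
    Function.Injective (mliftLinear c) := by
  intro x y hxy
  ext i
  fin_cases i
  exacts [congrFun hxy 0, congrFun hxy 1, congrFun hxy 2]

lemma mlift_eq_mliftLinear_add {b : ℤ × ℤ → EuclideanSpace ℝ (Fin 3)} {ρ : ℤ × ℤ → ℝ}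
    {c : EuclideanSpace ℝ (Fin 3)} {k : ℝ} {d : ℤ × ℤ} (hρ : ρ d = ⟪b d, c⟫_ℝ - k) :
    mlift b ρ d = mliftLinear c (b d) + ![0, 0, 0, -k - 1 / 2, -k + 1 / 2] := by
  funext i
  fin_cases i <;> simp [mlift, mliftLinear, hρ] <;> ring

theorem finrank_span_image_mlift (b : ℤ × ℤ → EuclideanSpace ℝ (Fin 3)) (ρ : ℤ × ℤ → ℝ)
    {c : EuclideanSpace ℝ (Fin 3)} {k : ℝ} {Q : Set (ℤ × ℤ)} (hQ : Q.Nonempty)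
    (hρ : ∀ d ∈ Q, ρ d = ⟪b d, c⟫_ℝ - k) :
    finrank ℝ (span ℝ (mlift b ρ '' Q)) = finrank ℝ (span ℝ (pairDiffs (b '' Q))) + 1 := by
  have himage : mlift b ρ '' Q =
      (fun x => mliftLinear c x + ![0, 0, 0, -k - 1 / 2, -k + 1 / 2]) '' (b '' Q) := by
    rw [Set.image_image]
    exact Set.image_congr fun d hd => mlift_eq_mliftLinear_add (hρ d hd)
  have hhyperplane : ∀ x ∈ mlift b ρ '' Q, x 4 - x 3 = 1 := by
    rintro _ ⟨d, -, rfl⟩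
    simp only [mlift, Matrix.cons_val]
    ring
  rw [finrank_span_eq_finrank_span_pairDiffs_add_one (hQ.image _)
      ((LinearMap.proj 4 : (Fin 5 → ℝ) →ₗ[ℝ] ℝ) - (LinearMap.proj 3 : (Fin 5 → ℝ) →ₗ[ℝ] ℝ))
      hhyperplane, himage,
    pairDiffs_image_add_const, span_image,
    (equivMapOfInjective _ (mliftLinear_injective c) _).finrank_eq]

end MoebiusLift

section Quads

def quad (p : ℤ × ℤ) : Set (ℤ × ℤ) := {p, p + (1, 0), p + (0, 1), p + (1, 1)}

lemma quad_nonempty (p : ℤ × ℤ) : (quad p).Nonempty := ⟨p, Set.mem_insert p _⟩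

lemma image_quad {α : Type*} (g : ℤ × ℤ → α) (p : ℤ × ℤ) :
    g '' quad p = {g p, g (p + (1, 0)), g (p + (0, 1)), g (p + (1, 1))} := by
  simp [quad, Set.image_insert_eq]

lemma incident_iff_mem_quad {v f : ℤ × ℤ} : Incident v f ↔ v ∈ quad f := Iff.rfl

lemma incident_add_one_one_of_mem_quad {p f : ℤ × ℤ} (hf : f ∈ quad p) :
    Incident (p + (1, 1)) f := by
  rcases hf with rfl | rfl | rfl | rfl
  · exact Or.inr (Or.inr (Or.inr rfl))
  · exact Or.inr (Or.inr (Or.inl (by rw [add_assoc]; rfl)))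
  · exact Or.inr (Or.inl (by rw [add_assoc]; rfl))
  · exact Or.inl rfl

end Quads

/-- An orthogonal binet (with Möbius lift data `ρ`) is a conjugate binet if and only if its
Möbius lift is a conjugate binet, i.e. the four lift vectors of each quad span a submodule of
finrank at most `3`. -/
theorem stmt_4 (bV bF : ℤ × ℤ → EuclideanSpace ℝ (Fin 3)) (ρV ρF : ℤ × ℤ → ℝ)
    (h : ∀ v f : ℤ × ℤ, Incident v f → ⟪bV v, bF f⟫_ℝ = ρV v + ρF f) :
    (IsConjugateNet bV ∧ IsConjugateNet bF) ↔
      (∀ p : ℤ × ℤ,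
        Module.finrank ℝ (Submodule.span ℝ
          ({mlift bV ρV p, mlift bV ρV (p + (1, 0)), mlift bV ρV (p + (0, 1)),
            mlift bV ρV (p + (1, 1))} : Set (Fin 5 → ℝ))) ≤ 3 ∧
        Module.finrank ℝ (Submodule.span ℝ
          ({mlift bF ρF p, mlift bF ρF (p + (1, 0)), mlift bF ρF (p + (0, 1)),
            mlift bF ρF (p + (1, 1))} : Set (Fin 5 → ℝ))) ≤ 3) := by
  have hV (p : ℤ × ℤ) : ∀ d ∈ quad p, ρV d = ⟪bV d, bF p⟫_ℝ - ρF p := fun d hd => by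
    linarith [h d p (incident_iff_mem_quad.2 hd)]
  have hF (p : ℤ × ℤ) : ∀ f ∈ quad p, ρF f = ⟪bF f, bV (p + (1, 1))⟫_ℝ - ρV (p + (1, 1)) :=
    fun f hf => by
      rw [real_inner_comm]
      linarith [h _ f (incident_add_one_one_of_mem_quad hf)]
  simp only [IsConjugateNet, ← forall_and]
  exact forall_congr' fun p => by
    rw [← image_quad bV, ← image_quad bF, ← image_quad (mlift bV ρV), ← image_quad (mlift bF ρF),
      finrank_span_image_mlift bV ρV (quad_nonempty p) (hV p),
      finrank_span_image_mlift bF ρF (quad_nonempty p) (hF p)]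
    omega
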